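/- arXiv:1711.09437 — 4 statements merged into one kernel-verified Lean document; each statement's English description precedes it below -/
import Mathlib

section
/- Neumann series with tame bounds: let X ⊆ Y be normed spaces with norms ‖·‖_{s'} ≥ ‖·‖_s, fix w with an associated quantity W := ‖w‖_{s'+σ} ≥ 0, and let R be a linear operator and 0 < ε L(s') ≤ c small such that for all h: ‖Rh‖_{s'} ≤ εL(s')(‖h‖_{s'} + W‖h‖_s) and ‖Rh‖_s ≤ εL‖h‖_s with L ≤ L(s'). Then for every p ≥ 1, ‖R^p h‖_{s'} ≤ (εL(s'))^p (‖h‖_{s'} + p W ‖h‖_s); consequently, if εL(s') ≤ 1/2 then Id − R is invertible and ‖(Id−R)^{−1}h‖_{s'} ≤ 2(‖h‖_{s'} + W‖h‖_s). -/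
/-!
Iterating the weak estimate gives `‖Rᵖ h‖_s ≤ (εL)ᵖ ‖h‖_s ≤ qᵖ ‖h‖_s` with `q = εL(s')`, and each
application of the strong estimate multiplies by `q` and adds one more term `W ‖·‖_s`, which by the
weak decay is again of size `qᵖ W ‖h‖_s`; hence `‖Rᵖ h‖_{s'} ≤ qᵖ (‖h‖_{s'} + p W ‖h‖_s)`.
Since `‖·‖_s ≤ ‖·‖_{s'}`, this bounds the operator norms by `qᵖ (1 + p W)`, which are summable for
`q < 1`, so the Neumann series `∑ Rᵖ` converges and inverts `1 - R`. Summing the pointwise bounds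
gives `‖h‖_{s'} / (1 - q) + W ‖h‖_s q / (1 - q)²`, which is at most `2 (‖h‖_{s'} + W ‖h‖_s)` for
`q ≤ 1/2`.
-/

open Function

theorem iterate_le_pow_mul_of_le_mul {α : Type*} {f : α → α} {ns : α → ℝ} {q : ℝ} (hq : 0 ≤ q)
    (hf : ∀ h, ns (f h) ≤ q * ns h) (n : ℕ) (h : α) : ns (f^[n] h) ≤ q ^ n * ns h := by
  induction n generalizing h with
  | zero => simp
  | succ n ih =>
    calc ns (f^[n + 1] h) = ns (f^[n] (f h)) := by rw [iterate_succ_apply]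
      _ ≤ q ^ n * ns (f h) := ih (f h)
      _ ≤ q ^ n * (q * ns h) := by gcongr; exact hf h
      _ = q ^ (n + 1) * ns h := by ring

theorem norm_iterate_le_of_tame {E : Type*} [SeminormedAddCommGroup E] {f : E → E} {ns : E → ℝ}
    {q W : ℝ} (hq : 0 ≤ q) (hW : 0 ≤ W) (hf' : ∀ h, ‖f h‖ ≤ q * (‖h‖ + W * ns h))
    (hf : ∀ h, ns (f h) ≤ q * ns h) (n : ℕ) (h : E) :
    ‖f^[n] h‖ ≤ q ^ n * (‖h‖ + n * W * ns h) := by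
  induction n with
  | zero => simp
  | succ n ih =>
    have hns : W * ns (f^[n] h) ≤ W * (q ^ n * ns h) :=
      mul_le_mul_of_nonneg_left (iterate_le_pow_mul_of_le_mul hq hf n h) hW
    calc ‖f^[n + 1] h‖ = ‖f (f^[n] h)‖ := by rw [iterate_succ_apply']
      _ ≤ q * (‖f^[n] h‖ + W * ns (f^[n] h)) := hf' _
      _ ≤ q * (q ^ n * (‖h‖ + n * W * ns h) + W * (q ^ n * ns h)) := by gcongr
      _ = q ^ (n + 1) * (‖h‖ + (n + 1 : ℕ) * W * ns h) := by push_cast; ring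

theorem hasSum_pow_mul_add_nat_mul {q : ℝ} (hq0 : 0 ≤ q) (hq1 : q < 1) (a b : ℝ) :
    HasSum (fun n : ℕ ↦ q ^ n * (a + n * b)) (a * (1 - q)⁻¹ + b * (q / (1 - q) ^ 2)) := by
  have hq : ‖q‖ < 1 := by rwa [Real.norm_of_nonneg hq0]
  rw [show (fun n : ℕ ↦ q ^ n * (a + n * b)) = fun n : ℕ ↦ a * q ^ n + b * ((n : ℝ) * q ^ n) from
    funext fun n ↦ by ring]
  exact ((hasSum_geometric_of_lt_one hq0 hq1).mul_left a).add
    ((hasSum_coe_mul_geometric_of_norm_lt_one hq).mul_left b)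

theorem mul_inv_one_sub_add_mul_div_one_sub_sq_le {q a b : ℝ} (hq : q ≤ 1 / 2)
    (ha : 0 ≤ a) (hb : 0 ≤ b) : a * (1 - q)⁻¹ + b * (q / (1 - q) ^ 2) ≤ 2 * (a + b) := by
  have h1 : (1 - q)⁻¹ ≤ 2 := by
    rw [inv_le_iff_one_le_mul₀ (by linarith)]
    linarith
  have h2 : q / (1 - q) ^ 2 ≤ 2 := by
    rw [div_le_iff₀ (by nlinarith)]
    nlinarith
  nlinarith [mul_le_mul_of_nonneg_left h1 ha, mul_le_mul_of_nonneg_left h2 hb]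

theorem exists_inverse_one_sub_of_norm_pow_apply_le {𝕜 E : Type*} [NontriviallyNormedField 𝕜]
    [NormedAddCommGroup E] [NormedSpace 𝕜 E] [CompleteSpace E] (R : Module.End 𝕜 E)
    {ns : E → ℝ} {q W : ℝ} (hq0 : 0 ≤ q) (hq1 : q < 1) (hW : 0 ≤ W) (hns1 : ∀ h, ns h ≤ ‖h‖)
    (hR : ∀ (n : ℕ) h, ‖(R ^ n) h‖ ≤ q ^ n * (‖h‖ + n * W * ns h)) :
    ∃ T : Module.End 𝕜 E, T * (1 - R) = 1 ∧ (1 - R) * T = 1 ∧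
      ∀ h, ‖T h‖ ≤ ‖h‖ * (1 - q)⁻¹ + W * ns h * (q / (1 - q) ^ 2) := by
  have hR_op : ∀ (n : ℕ) h, ‖(R ^ n) h‖ ≤ q ^ n * (1 + n * W) * ‖h‖ := fun n h ↦
    calc ‖(R ^ n) h‖ ≤ q ^ n * (‖h‖ + n * W * ns h) := hR n h
      _ ≤ q ^ n * (‖h‖ + n * W * ‖h‖) := by gcongr; exact hns1 h
      _ = q ^ n * (1 + n * W) * ‖h‖ := by ring
  let x : E →L[𝕜] E := R.mkContinuous _ (by simpa using hR_op 1)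
  have hx : ∀ n : ℕ, ((x ^ n : E →L[𝕜] E) : Module.End 𝕜 E) = R ^ n := fun n ↦ by
    rw [ContinuousLinearMap.toLinearMap_pow]; rfl
  have hx1 : (x : Module.End 𝕜 E) = R := rfl
  have hsum : Summable (x ^ ·) :=
    (hasSum_pow_mul_add_nat_mul hq0 hq1 1 W).summable.of_norm_bounded fun n ↦
      (x ^ n).opNorm_le_bound (by positivity) fun h ↦ by
        rw [← ContinuousLinearMap.coe_coe, hx]
        exact hR_op n h
  refine ⟨(∑' n, x ^ n : E →L[𝕜] E), ?_, ?_, fun h ↦ ?_⟩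
  · simpa [hx1] using
      congrArg (fun S : E →L[𝕜] E ↦ (S : Module.End 𝕜 E)) hsum.tsum_pow_mul_one_sub
  · simpa [hx1] using
      congrArg (fun S : E →L[𝕜] E ↦ (S : Module.End 𝕜 E)) hsum.one_sub_mul_tsum_pow
  · have hS := hsum.hasSum.mapL (ContinuousLinearMap.apply 𝕜 E h)
    simp only [ContinuousLinearMap.apply_apply] at hS
    rw [ContinuousLinearMap.coe_coe, ← hS.tsum_eq]
    refine tsum_of_norm_bounded (hasSum_pow_mul_add_nat_mul hq0 hq1 ‖h‖ (W * ns h)) fun n ↦ ?_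
    rw [← ContinuousLinearMap.coe_coe, hx, ← mul_assoc]
    exact hR n h

theorem stmt12_general {E : Type*} [NormedAddCommGroup E] [NormedSpace ℝ E] [CompleteSpace E]
    (R : Module.End ℝ E) (ns : E → ℝ) (W ε L L' : ℝ)
    (hW : 0 ≤ W) (hε : 0 < ε) (hL' : 0 < L') (hLL' : L ≤ L')
    (hns0 : ∀ h : E, 0 ≤ ns h) (hns1 : ∀ h : E, ns h ≤ ‖h‖)
    (hRs' : ∀ h : E, ‖R h‖ ≤ ε * L' * (‖h‖ + W * ns h))
    (hRs : ∀ h : E, ns (R h) ≤ ε * L * ns h) :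
    (∀ p : ℕ, 1 ≤ p → ∀ h : E,
      ‖(R ^ p) h‖ ≤ (ε * L') ^ p * (‖h‖ + (p : ℝ) * W * ns h))
    ∧ (ε * L' ≤ 1 / 2 → ∃ T : Module.End ℝ E,
        (∀ u : E, T (u - R u) = u) ∧ (∀ h : E, T h - R (T h) = h) ∧
        ∀ h : E, ‖T h‖ ≤ 2 * (‖h‖ + W * ns h)) := by
  have hq : 0 ≤ ε * L' := by positivity
  have hRs_q : ∀ h, ns (R h) ≤ ε * L' * ns h := fun h ↦
    (hRs h).trans (mul_le_mul_of_nonneg_right (mul_le_mul_of_nonneg_left hLL' hε.le) (hns0 h))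
  have hpow : ∀ (p : ℕ) h, ‖(R ^ p) h‖ ≤ (ε * L') ^ p * (‖h‖ + p * W * ns h) := fun p h ↦ by
    rw [Module.End.pow_apply]
    exact norm_iterate_le_of_tame hq hW hRs' hRs_q p h
  refine ⟨fun p _ ↦ hpow p, fun hq_half ↦ ?_⟩
  obtain ⟨T, hTl, hTr, hT⟩ :=
    exists_inverse_one_sub_of_norm_pow_apply_le R hq (by linarith) hW hns1 hpow
  refine ⟨T, fun u ↦ by simpa using congr($hTl u), fun h ↦ by simpa using congr($hTr h),
    fun h ↦ (hT h).trans ?_⟩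
  exact mul_inv_one_sub_add_mul_div_one_sub_sq_le hq_half (norm_nonneg h)
    (mul_nonneg hW (hns0 h))

/-- Neumann series with tame bounds: `‖·‖` is the `s'`-norm and `ns` the (weaker)
`s`-norm, `W = ‖w‖_{s'+σ}`. If `‖Rh‖_{s'} ≤ εL(s')(‖h‖_{s'} + W‖h‖_s)` and
`‖Rh‖_s ≤ εL‖h‖_s` with `L ≤ L(s')`, then `‖R^p h‖_{s'} ≤ (εL(s'))^p(‖h‖_{s'} + pW‖h‖_s)`
for every `p ≥ 1`; consequently, if `εL(s') ≤ 1/2` then `Id − R` is invertible with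
`‖(Id−R)⁻¹h‖_{s'} ≤ 2(‖h‖_{s'} + W‖h‖_s)`. -/
theorem stmt12 {E : Type*} [NormedAddCommGroup E] [NormedSpace ℝ E] [CompleteSpace E]
    (R : Module.End ℝ E) (ns : E → ℝ) (W ε L L' : ℝ)
    (hW : 0 ≤ W) (hε : 0 < ε) (hL : 0 ≤ L) (hL' : 0 < L') (hLL' : L ≤ L')
    (hns0 : ∀ h : E, 0 ≤ ns h) (hns1 : ∀ h : E, ns h ≤ ‖h‖)
    (hRs' : ∀ h : E, ‖R h‖ ≤ ε * L' * (‖h‖ + W * ns h))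
    (hRs : ∀ h : E, ns (R h) ≤ ε * L * ns h) :
    (∀ p : ℕ, 1 ≤ p → ∀ h : E,
      ‖(R ^ p) h‖ ≤ (ε * L') ^ p * (‖h‖ + (p : ℝ) * W * ns h))
    ∧ (ε * L' ≤ 1 / 2 → ∃ T : Module.End ℝ E,
        (∀ u : E, T (u - R u) = u) ∧ (∀ h : E, T h - R (T h) = h) ∧
        ∀ h : E, ‖T h‖ ≤ 2 * (‖h‖ + W * ns h)) :=
  stmt12_general R ns W ε L L' hW hε hL' hLL' hns0 hns1 hRs' hRs
end

section
/- Iterated product bound (F1): let χ > 1, 𝔮 > 0, α > 0 and define N_k := ⌊e^{𝔮 χ^k}⌋ for k ∈ ℕ. Suppose a sequence S_n ≥ 1 satisfies S_n ≤ (1 + N_n^α) S_{n−1} for all n ≥ 1. Then there is a constant C̃ = C̃(χ, 𝔮, α) (independent of n and S₀) such that S_n ≤ C̃ S₀ N_{n+1}^{α/(χ−1)} for all n, where one may take C̃ = 2^{α/(χ−1)} ∏_{k=1}^∞ (1 + e^{−𝔮 χ^k α}). -/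
/-- `N_k = ⌊exp(𝔮 χ^k)⌋`. -/
noncomputable def NSeq (𝔮 χ : ℝ) (k : ℕ) : ℕ :=
  Nat.floor (Real.exp (𝔮 * χ ^ k))

/-- Iterated product bound (F1): with `χ > 1`, `𝔮 > 0`, `α > 0` and
`N_k = ⌊e^{𝔮χ^k}⌋`, any sequence `S_n ≥ 1` satisfying `S_n ≤ (1 + N_n^α)S_{n−1}`
obeys `S_n ≤ C̃ S₀ N_{n+1}^{α/(χ−1)}` for a constant `C̃ = C̃(χ,𝔮,α)` independent of
`n` and of the sequence. -/
theorem stmt14 (χ 𝔮 α : ℝ) (hχ : 1 < χ) (h𝔮 : 0 < 𝔮) (hα : 0 < α) :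
    ∃ C : ℝ, 0 < C ∧ ∀ S : ℕ → ℝ,
      (∀ n : ℕ, 1 ≤ S n) →
      (∀ n : ℕ, 1 ≤ n → S n ≤ (1 + ((NSeq 𝔮 χ n : ℕ) : ℝ) ^ α) * S (n - 1)) →
      ∀ n : ℕ, S n ≤ C * S 0 * ((NSeq 𝔮 χ (n + 1) : ℕ) : ℝ) ^ (α / (χ - 1)) := by
  have hχ1 : 0 < χ - 1 := by linarith
  set β := α / (χ - 1) with hβ
  have hβpos : 0 < β := div_pos hα hχ1
  set r := Real.exp (-(𝔮 * α * (χ - 1))) with hr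
  have hr0 : 0 < r := Real.exp_pos _
  have hr1 : r < 1 := by
    rw [hr]
    have : 0 < 𝔮 * α * (χ - 1) := by positivity
    exact Real.exp_lt_one_iff.mpr (by linarith)
  refine ⟨Real.exp (r / (1 - r)) * 2 ^ β, by positivity, ?_⟩
  intro S hS1 hrec n
  have hS0 : (0:ℝ) ≤ S 0 := le_trans zero_le_one (hS1 0)
  -- Step 1: product bound
  have key : ∀ m : ℕ, S m ≤ S 0 * ∏ k ∈ Finset.Icc 1 m, (1 + ((NSeq 𝔮 χ k : ℕ) : ℝ) ^ α) := by
    intro m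
    induction m with
    | zero => simp
    | succ m ih =>
      have h1 := hrec (m+1) (by omega)
      simp only [Nat.add_sub_cancel] at h1
      have hpos : (0:ℝ) ≤ 1 + ((NSeq 𝔮 χ (m+1) : ℕ) : ℝ) ^ α := by positivity
      calc S (m+1) ≤ (1 + ((NSeq 𝔮 χ (m+1) : ℕ) : ℝ) ^ α) * S m := h1
        _ ≤ (1 + ((NSeq 𝔮 χ (m+1) : ℕ) : ℝ) ^ α) *
            (S 0 * ∏ k ∈ Finset.Icc 1 m, (1 + ((NSeq 𝔮 χ k : ℕ) : ℝ) ^ α)) :=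
          mul_le_mul_of_nonneg_left ih hpos
        _ = S 0 * ∏ k ∈ Finset.Icc 1 (m+1), (1 + ((NSeq 𝔮 χ k : ℕ) : ℝ) ^ α) := by
          rw [Finset.prod_Icc_succ_top (by omega)]; ring
  -- per-factor bound
  have hfac : ∀ k : ℕ, 1 ≤ k →
      (1 + ((NSeq 𝔮 χ k : ℕ) : ℝ) ^ α) ≤ Real.exp (𝔮 * α * χ ^ k + r ^ k) := by
    intro k hk
    have hNle : ((NSeq 𝔮 χ k : ℕ) : ℝ) ≤ Real.exp (𝔮 * χ ^ k) :=
      Nat.floor_le (Real.exp_pos _).le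
    have h1 : ((NSeq 𝔮 χ k : ℕ) : ℝ) ^ α ≤ Real.exp (𝔮 * α * χ ^ k) := by
      calc ((NSeq 𝔮 χ k : ℕ) : ℝ) ^ α ≤ (Real.exp (𝔮 * χ ^ k)) ^ α :=
            Real.rpow_le_rpow (Nat.cast_nonneg _) hNle hα.le
        _ = Real.exp (𝔮 * α * χ ^ k) := by
            rw [← Real.exp_mul]; ring_nf
    have hrk : Real.exp (-(𝔮 * α * χ ^ k)) ≤ r ^ k := by
      rw [hr, ← Real.exp_nat_mul]
      apply Real.exp_le_exp.mpr
      have hb : 1 + (k:ℝ) * (χ - 1) ≤ χ ^ k := by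
        have := one_add_mul_le_pow (a := χ - 1) (by linarith) k
        simpa using this
      have : (k:ℝ) * (χ - 1) ≤ χ ^ k := by linarith
      nlinarith [mul_pos h𝔮 hα]
    have hexp : Real.exp (𝔮 * α * χ ^ k) * (1 + Real.exp (-(𝔮 * α * χ ^ k))) =
        Real.exp (𝔮 * α * χ ^ k) + 1 := by
      rw [mul_add, mul_one, ← Real.exp_add]
      simp
    calc 1 + ((NSeq 𝔮 χ k : ℕ) : ℝ) ^ α ≤ 1 + Real.exp (𝔮 * α * χ ^ k) := by linarith
      _ = Real.exp (𝔮 * α * χ ^ k) * (1 + Real.exp (-(𝔮 * α * χ ^ k))) := by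
          rw [hexp]; ring
      _ ≤ Real.exp (𝔮 * α * χ ^ k) * (1 + r ^ k) :=
          mul_le_mul_of_nonneg_left (by linarith) (Real.exp_pos _).le
      _ ≤ Real.exp (𝔮 * α * χ ^ k) * Real.exp (r ^ k) :=
          mul_le_mul_of_nonneg_left (by linarith [Real.add_one_le_exp (r ^ k)])
            (Real.exp_pos _).le
      _ = Real.exp (𝔮 * α * χ ^ k + r ^ k) := (Real.exp_add _ _).symm
  -- bound the product by exponential of sums
  have hprod : (∏ k ∈ Finset.Icc 1 n, (1 + ((NSeq 𝔮 χ k : ℕ) : ℝ) ^ α)) ≤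
      Real.exp (∑ k ∈ Finset.Icc 1 n, (𝔮 * α * χ ^ k + r ^ k)) := by
    rw [Real.exp_sum]
    apply Finset.prod_le_prod
    · intro k _; positivity
    · intro k hk
      exact hfac k (Finset.mem_Icc.mp hk).1
  -- bound the sums
  have hgeom1 : (∑ k ∈ Finset.Icc 1 n, χ ^ k) ≤ χ ^ (n+1) / (χ - 1) := by
    have hsub : (∑ k ∈ Finset.Icc 1 n, χ ^ k) ≤ ∑ k ∈ Finset.range (n+1), χ ^ k := by
      apply Finset.sum_le_sum_of_subset_of_nonneg
      · intro x hx
        simp only [Finset.mem_Icc] at hx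
        simp only [Finset.mem_range]; omega
      · intro i _ _; positivity
    rw [geom_sum_eq (by linarith : χ ≠ 1)] at hsub
    refine hsub.trans ?_
    gcongr
    linarith
  have hgeom2 : (∑ k ∈ Finset.Icc 1 n, r ^ k) ≤ r / (1 - r) := by
    have heq : (∑ k ∈ Finset.Icc 1 n, r ^ k) = r * ∑ k ∈ Finset.range n, r ^ k := by
      rw [Finset.mul_sum]
      rw [show Finset.Icc 1 n = Finset.Ico 1 (n+1) by rfl, Finset.sum_Ico_eq_sum_range]
      simp [pow_succ, pow_add, mul_comm]
    rw [heq]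
    have hg : (∑ k ∈ Finset.range n, r ^ k) ≤ 1 / (1 - r) := by
      rw [geom_sum_eq (by linarith : r ≠ 1)]
      have h2 : (r ^ n - 1) / (r - 1) = (1 - r ^ n) / (1 - r) := by
        rw [← neg_div_neg_eq]; ring_nf
      rw [h2, div_le_div_iff₀ (by linarith) (by linarith)]
      nlinarith [pow_pos hr0 n]
    calc r * ∑ k ∈ Finset.range n, r ^ k ≤ r * (1 / (1 - r)) :=
          mul_le_mul_of_nonneg_left hg hr0.le
      _ = r / (1 - r) := by ring
  have hsum : (∑ k ∈ Finset.Icc 1 n, (𝔮 * α * χ ^ k + r ^ k)) ≤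
      𝔮 * α * χ ^ (n+1) / (χ - 1) + r / (1 - r) := by
    rw [Finset.sum_add_distrib, ← Finset.mul_sum]
    have h1 : 𝔮 * α * (∑ k ∈ Finset.Icc 1 n, χ ^ k) ≤ 𝔮 * α * (χ ^ (n+1) / (χ - 1)) :=
      mul_le_mul_of_nonneg_left hgeom1 (by positivity)
    have : 𝔮 * α * (χ ^ (n+1) / (χ - 1)) = 𝔮 * α * χ ^ (n+1) / (χ - 1) := by ring
    linarith
  -- compare with N_{n+1}
  have hNbig : Real.exp (𝔮 * χ ^ (n+1)) ≤ 2 * ((NSeq 𝔮 χ (n+1) : ℕ) : ℝ) := by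
    set x := Real.exp (𝔮 * χ ^ (n+1)) with hx
    have hx1 : (1:ℝ) ≤ x := Real.one_le_exp (by positivity)
    have hfl : x - 1 < (⌊x⌋₊ : ℝ) := Nat.sub_one_lt_floor x
    have hfl1 : (1:ℕ) ≤ ⌊x⌋₊ := Nat.le_floor (by exact_mod_cast hx1)
    have hfl1' : (1:ℝ) ≤ (⌊x⌋₊ : ℝ) := by exact_mod_cast hfl1
    show x ≤ 2 * (⌊x⌋₊ : ℝ)
    linarith
  have hrpow : Real.exp (𝔮 * α * χ ^ (n+1) / (χ - 1)) ≤
      2 ^ β * ((NSeq 𝔮 χ (n+1) : ℕ) : ℝ) ^ β := by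
    have h1 : Real.exp (𝔮 * α * χ ^ (n+1) / (χ - 1)) = (Real.exp (𝔮 * χ ^ (n+1))) ^ β := by
      rw [← Real.exp_mul, hβ]; ring_nf
    rw [h1, ← Real.mul_rpow (by norm_num) (Nat.cast_nonneg _)]
    exact Real.rpow_le_rpow (Real.exp_pos _).le hNbig hβpos.le
  -- put everything together
  have hP : (∏ k ∈ Finset.Icc 1 n, (1 + ((NSeq 𝔮 χ k : ℕ) : ℝ) ^ α)) ≤
      Real.exp (r / (1 - r)) * (2 ^ β * ((NSeq 𝔮 χ (n+1) : ℕ) : ℝ) ^ β) := by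
    calc (∏ k ∈ Finset.Icc 1 n, (1 + ((NSeq 𝔮 χ k : ℕ) : ℝ) ^ α))
        ≤ Real.exp (∑ k ∈ Finset.Icc 1 n, (𝔮 * α * χ ^ k + r ^ k)) := hprod
      _ ≤ Real.exp (𝔮 * α * χ ^ (n+1) / (χ - 1) + r / (1 - r)) := Real.exp_le_exp.mpr hsum
      _ = Real.exp (r / (1 - r)) * Real.exp (𝔮 * α * χ ^ (n+1) / (χ - 1)) := by
          rw [← Real.exp_add]; ring_nf
      _ ≤ Real.exp (r / (1 - r)) * (2 ^ β * ((NSeq 𝔮 χ (n+1) : ℕ) : ℝ) ^ β) :=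
          mul_le_mul_of_nonneg_left hrpow (Real.exp_pos _).le
  calc S n ≤ S 0 * ∏ k ∈ Finset.Icc 1 n, (1 + ((NSeq 𝔮 χ k : ℕ) : ℝ) ^ α) := key n
    _ ≤ S 0 * (Real.exp (r / (1 - r)) * (2 ^ β * ((NSeq 𝔮 χ (n+1) : ℕ) : ℝ) ^ β)) :=
        mul_le_mul_of_nonneg_left hP hS0
    _ = Real.exp (r / (1 - r)) * 2 ^ β * S 0 * ((NSeq 𝔮 χ (n+1) : ℕ) : ℝ) ^ β := by ring
end

section
/- Geometric super-exponential sum bound: let χ > 1, 𝔮 > 0, and α₁, α₂, α₃ > 0 with −α₁ + (χ−1)α₂ + α₃ > 0, and N_k := ⌊e^{𝔮χ^k}⌋. Then there is a constant C = C(χ, 𝔮, α₁, α₂, α₃) such that for all n ≥ 2, Σ_{k=2}^n exp(α₁𝔮(χ^{n+1} − χ^{n+2−k})/(χ−1)) · exp(α₂𝔮χ^{n+1−k}) · exp(α₃𝔮χ^{n+1−k}/(χ−1)) ≤ C · N_{n+1}^{α₂ + α₃/(χ−1)}. -/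
open scoped BigOperators

set_option maxHeartbeats 1000000 in
/-- Geometric super-exponential sum bound: with `χ > 1`, `𝔮 > 0`,
`α₁, α₂, α₃ > 0` and `−α₁ + (χ−1)α₂ + α₃ > 0`, there is `C` such that for `n ≥ 2`,
`Σ_{k=2}^n e^{α₁𝔮(χ^{n+1}−χ^{n+2−k})/(χ−1)} e^{α₂𝔮χ^{n+1−k}} e^{α₃𝔮χ^{n+1−k}/(χ−1)}
  ≤ C N_{n+1}^{α₂+α₃/(χ−1)}`. -/
theorem stmt15 (χ 𝔮 α₁ α₂ α₃ : ℝ) (hχ : 1 < χ) (h𝔮 : 0 < 𝔮)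
    (h1 : 0 < α₁) (h2 : 0 < α₂) (h3 : 0 < α₃)
    (hcond : 0 < -α₁ + (χ - 1) * α₂ + α₃) :
    ∃ C : ℝ, 0 < C ∧ ∀ n : ℕ, 2 ≤ n →
      ∑ k ∈ Finset.Icc 2 n,
        Real.exp (α₁ * 𝔮 * (χ ^ (n + 1) - χ ^ (n + 2 - k)) / (χ - 1))
          * Real.exp (α₂ * 𝔮 * χ ^ (n + 1 - k))
          * Real.exp (α₃ * 𝔮 * χ ^ (n + 1 - k) / (χ - 1))
      ≤ C * ((NSeq 𝔮 χ (n + 1) : ℕ) : ℝ) ^ (α₂ + α₃ / (χ - 1)) := by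
  have hχ1 : (0:ℝ) < χ - 1 := by linarith
  have hχ0 : (0:ℝ) < χ := by linarith
  obtain ⟨β, hβdef⟩ : ∃ b : ℝ, b = α₂ + α₃ / (χ - 1) := ⟨_, rfl⟩
  obtain ⟨γ, hγdef⟩ : ∃ g : ℝ, g = β - α₁ / (χ - 1) := ⟨_, rfl⟩
  obtain ⟨c, hcdef⟩ : ∃ g : ℝ, g = β - α₁ * χ / (χ - 1) := ⟨_, rfl⟩
  have hβ : 0 < β := by rw [hβdef]; positivity
  have hβχ : α₁ < β * (χ - 1) := by
    rw [hβdef]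
    have h' : (α₂ + α₃ / (χ - 1)) * (χ - 1) = (χ - 1) * α₂ + α₃ := by
      field_simp
    rw [h']; linarith
  have hγ : 0 < γ := by
    have : α₁ / (χ - 1) < β := (div_lt_iff₀ hχ1).mpr (by linarith)
    rw [hγdef]; linarith
  obtain ⟨ε, hεdef⟩ : ∃ e : ℝ, e = min γ α₁ := ⟨_, rfl⟩
  have hε : 0 < ε := hεdef ▸ lt_min hγ h1
  have hεγ : ε ≤ γ := hεdef ▸ min_le_left _ _
  have hεα : ε ≤ α₁ := hεdef ▸ min_le_right _ _
  obtain ⟨a, hadef⟩ : ∃ x : ℝ, x = 𝔮 * ε * (χ - 1) := ⟨_, rfl⟩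
  have ha : 0 < a := by rw [hadef]; positivity
  refine ⟨(2:ℝ) ^ β / a, by positivity, ?_⟩
  intro n hn
  rw [← hβdef]
  have hγc : γ * (χ - 1) = β * (χ - 1) - α₁ := by
    rw [hγdef]; field_simp
  have hcc : c * (χ - 1) = β * (χ - 1) - α₁ * χ := by
    rw [hcdef]; field_simp
  have hX2 : χ ^ (n + 1) = χ ^ 2 * χ ^ (n - 1) := by
    rw [← pow_add]; congr 1; omega
  have hTpos : (0:ℝ) < χ ^ (n - 1) := pow_pos hχ0 _
  have hTX : χ ^ (n - 1) ≤ χ ^ (n + 1) := pow_le_pow_right₀ (le_of_lt hχ) (by omega)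
  -- `c + α₁ ≤ γ * χ ^ 2`
  have hca : c + α₁ ≤ γ * χ ^ 2 := by
    have h2' : (c + α₁) * (χ - 1) ≤ γ * χ ^ 2 * (χ - 1) := by
      have hχ2 : (0:ℝ) < χ ^ 2 - 1 := by nlinarith
      nlinarith [hcc, hγc, mul_pos (sub_pos.mpr hβχ) hχ2]
    exact le_of_mul_le_mul_right h2' hχ1
  -- per-term bound
  have key : ∀ k ∈ Finset.Icc 2 n,
      Real.exp (α₁ * 𝔮 * (χ ^ (n + 1) - χ ^ (n + 2 - k)) / (χ - 1))
          * Real.exp (α₂ * 𝔮 * χ ^ (n + 1 - k))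
          * Real.exp (α₃ * 𝔮 * χ ^ (n + 1 - k) / (χ - 1))
        ≤ Real.exp (β * 𝔮 * χ ^ (n + 1)) * Real.exp (-(𝔮 * ε * χ ^ (n - 1))) := by
    intro k hk
    obtain ⟨hk2, hkn⟩ := Finset.mem_Icc.mp hk
    have hm1 : n + 2 - k = (n + 1 - k) + 1 := by omega
    obtain ⟨m, hm⟩ : ∃ m, m = n + 1 - k := ⟨_, rfl⟩
    rw [← hm] at hm1 ⊢
    have hmle : m ≤ n - 1 := by omega
    rw [hm1, ← Real.exp_add, ← Real.exp_add, ← Real.exp_add]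
    apply Real.exp_le_exp.mpr
    have hpm : (0:ℝ) < χ ^ m := pow_pos hχ0 m
    have hpmle : χ ^ m ≤ χ ^ (n - 1) := pow_le_pow_right₀ (le_of_lt hχ) hmle
    have hid : α₁ * 𝔮 * (χ ^ (n + 1) - χ ^ (m + 1)) / (χ - 1) + α₂ * 𝔮 * χ ^ m
        + α₃ * 𝔮 * χ ^ m / (χ - 1)
        = β * 𝔮 * χ ^ (n + 1) - γ * 𝔮 * χ ^ (n + 1) + c * 𝔮 * χ ^ m := by
      rw [hβdef, hγdef, hcdef, hβdef]
      have h : (χ - 1) ≠ 0 := ne_of_gt hχ1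
      field_simp
      ring
    rw [hid]
    have hmain : c * 𝔮 * χ ^ m + 𝔮 * ε * χ ^ (n - 1) ≤ γ * 𝔮 * χ ^ (n + 1) := by
      rcases le_or_gt c 0 with hc | hc
      · have e1 : c * 𝔮 * χ ^ m ≤ 0 :=
          mul_nonpos_of_nonpos_of_nonneg
            (mul_nonpos_of_nonpos_of_nonneg hc h𝔮.le) hpm.le
        have e2 : 𝔮 * ε * χ ^ (n - 1) ≤ γ * 𝔮 * χ ^ (n + 1) := by
          have h' : ε * χ ^ (n - 1) ≤ γ * χ ^ (n + 1) :=
            mul_le_mul hεγ hTX hTpos.le hγ.le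
          have h'' := mul_le_mul_of_nonneg_left h' h𝔮.le
          linarith [h'']
        linarith
      · have e1 : c * 𝔮 * χ ^ m ≤ c * 𝔮 * χ ^ (n - 1) := by
          have h'' := mul_le_mul_of_nonneg_left hpmle (mul_pos hc h𝔮).le
          linarith [h'']
        have e2 : c * 𝔮 * χ ^ (n - 1) + 𝔮 * ε * χ ^ (n - 1)
            ≤ γ * 𝔮 * χ ^ (n + 1) := by
          rw [hX2]
          have h3' : c + ε ≤ γ * χ ^ 2 := by linarith
          have h'' := mul_le_mul_of_nonneg_right h3' (mul_pos h𝔮 hTpos).le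
          linarith [h'']
        linarith
    linarith
  have hcard : (Finset.Icc 2 n).card = n - 1 := by
    rw [Nat.card_Icc]; omega
  have hsum := Finset.sum_le_card_nsmul (Finset.Icc 2 n) _ _ key
  rw [hcard, nsmul_eq_mul] at hsum
  refine hsum.trans ?_
  set N := NSeq 𝔮 χ (n + 1) with hNdef
  have hqX : 0 < 𝔮 * χ ^ (n + 1) := by positivity
  have hN1 : 1 ≤ N := by
    apply Nat.le_floor
    simpa using Real.one_le_exp hqX.le
  have hN2 : Real.exp (𝔮 * χ ^ (n + 1)) ≤ 2 * (N : ℝ) := by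
    have h := (Nat.lt_floor_add_one (Real.exp (𝔮 * χ ^ (n + 1)))).le
    have h' : (N : ℝ) + 1 ≤ 2 * N := by
      have : (1:ℝ) ≤ N := by exact_mod_cast hN1
      linarith
    exact le_trans h (by exact_mod_cast h')
  have hEβ : Real.exp (β * 𝔮 * χ ^ (n + 1)) ≤ (2:ℝ) ^ β * (N : ℝ) ^ β := by
    have e1 : Real.exp (β * 𝔮 * χ ^ (n + 1))
        = (Real.exp (𝔮 * χ ^ (n + 1))) ^ β := by
      rw [← Real.exp_mul]; ring_nf
    rw [e1]
    calc (Real.exp (𝔮 * χ ^ (n + 1))) ^ β ≤ (2 * (N:ℝ)) ^ β :=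
          Real.rpow_le_rpow (Real.exp_nonneg _) hN2 hβ.le
      _ = (2:ℝ) ^ β * (N : ℝ) ^ β := Real.mul_rpow (by norm_num) (Nat.cast_nonneg _)
  have hBern : ((n - 1 : ℕ) : ℝ) * (χ - 1) ≤ χ ^ (n - 1) := by
    have h := one_add_mul_le_pow (a := χ - 1) (by linarith) (n - 1)
    have h' : (1:ℝ) + ((n-1:ℕ):ℝ) * (χ - 1) ≤ χ ^ (n - 1) := by
      simpa using h
    linarith
  have hexpm : Real.exp (-(𝔮 * ε * χ ^ (n - 1)))
      ≤ Real.exp (-(a * ((n - 1 : ℕ) : ℝ))) := by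
    apply Real.exp_le_exp.mpr
    rw [hadef]
    nlinarith [mul_le_mul_of_nonneg_left hBern (mul_pos h𝔮 hε).le]
  have hxe : ((n - 1 : ℕ) : ℝ) * Real.exp (-(a * ((n - 1 : ℕ) : ℝ))) ≤ 1 / a := by
    have hx : (0:ℝ) ≤ ((n - 1 : ℕ) : ℝ) := Nat.cast_nonneg _
    rw [Real.exp_neg, ← div_eq_mul_inv, div_le_div_iff₀ (Real.exp_pos _) ha]
    have h := Real.add_one_le_exp (a * ((n - 1 : ℕ) : ℝ))
    nlinarith
  calc ((n - 1 : ℕ) : ℝ) * (Real.exp (β * 𝔮 * χ ^ (n + 1))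
          * Real.exp (-(𝔮 * ε * χ ^ (n - 1))))
      = (((n - 1 : ℕ) : ℝ) * Real.exp (-(𝔮 * ε * χ ^ (n - 1))))
          * Real.exp (β * 𝔮 * χ ^ (n + 1)) := by ring
    _ ≤ (1 / a) * ((2:ℝ) ^ β * (N : ℝ) ^ β) := by
        apply mul_le_mul _ hEβ (Real.exp_nonneg _) (by positivity)
        calc ((n - 1 : ℕ) : ℝ) * Real.exp (-(𝔮 * ε * χ ^ (n - 1)))
            ≤ ((n - 1 : ℕ) : ℝ) * Real.exp (-(a * ((n - 1 : ℕ) : ℝ))) := by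
              exact mul_le_mul_of_nonneg_left hexpm (Nat.cast_nonneg _)
          _ ≤ 1 / a := hxe
    _ = (2:ℝ) ^ β / a * (N : ℝ) ^ β := by ring
end

section
/- Eigenvalue stability under L∞ perturbation: let a ∈ C([0,2π]) with a > 0, and let 𝔡₁, 𝔡₂ ∈ L²(0,2π) be potentials such that the associated multiplication operators by c²𝔡_i(ψ(·))/a(ψ(·)) are bounded on L², where ψ is the Liouville change of variable with c = (1/2π)∫₀^{2π}√a. Then the l-th periodic eigenvalues of −y'' + 𝔡_i y = λ a y on [0,2π] (with y(0)=y(2π), y'(0)=y'(2π)) satisfy |λ_l^±(𝔡₂) − λ_l^±(𝔡₁)| ≤ (1/c²)‖ϑ₂ − ϑ₁‖_{L(L²,L²)}, where ϑ_i(ξ) = c²𝔡_i(ψ(ξ))/a(ψ(ξ)). -/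
open Set intervalIntegral

/-- Rayleigh quotient of the weighted Hill problem `−y'' + q y = λ a y` on `[0,2π]`:
`R(y) = (∫ y'² + q y²)/(∫ a y²)`. -/
noncomputable def rayleigh (a q y : ℝ → ℝ) : ℝ :=
  (∫ t in (0 : ℝ)..(2 * Real.pi), ((deriv y t) ^ 2 + q t * (y t) ^ 2)) /
    (∫ t in (0 : ℝ)..(2 * Real.pi), a t * (y t) ^ 2)

/-- The space of `2π`-periodic `C¹` functions on `ℝ`. -/
def PerC1 : Submodule ℝ (ℝ → ℝ) where
  carrier := {y | ContDiff ℝ 1 y ∧ Function.Periodic y (2 * Real.pi)}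
  add_mem' := fun hy hz => ⟨hy.1.add hz.1, fun x => by
    simp only [Pi.add_apply, hy.2 x, hz.2 x]⟩
  zero_mem' := ⟨contDiff_const, fun x => rfl⟩
  smul_mem' := fun c y hy => ⟨hy.1.const_smul c, fun x => by
    simp only [Pi.smul_apply, hy.2 x]⟩

/-- The `l`-th periodic eigenvalue of the weighted Hill problem `−y'' + q y = λ a y`,
defined by the Courant–Fischer min–max principle over `(l+1)`-dimensional subspaces of
`2π`-periodic `C¹` functions. -/
noncomputable def hillEig (a q : ℝ → ℝ) (l : ℕ) : ℝ :=
  sInf ((fun V => sSup ((fun y => rayleigh a q y) '' {y : ℝ → ℝ | y ∈ V ∧ y ≠ 0})) '' {V : Submodule ℝ (ℝ → ℝ) |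
      V ≤ PerC1 ∧ Module.finrank ℝ V = l + 1})

lemma abs_iSup_sub_iSup_le {ι : Sort*} [Nonempty ι] {g₁ g₂ : ι → ℝ} {K : ℝ} (hK : 0 ≤ K)
    (h : ∀ x, |g₂ x - g₁ x| ≤ K) : |(⨆ x, g₂ x) - ⨆ x, g₁ x| ≤ K := by
  have h21 : ∀ x, g₂ x ≤ g₁ x + K := fun x => by linarith [(abs_sub_le_iff.1 (h x)).1]
  have h12 : ∀ x, g₁ x ≤ g₂ x + K := fun x => by linarith [(abs_sub_le_iff.1 (h x)).2]
  by_cases hb : BddAbove (Set.range g₁)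
  · have hb₂ : BddAbove (Set.range g₂) := by
      obtain ⟨u, hu⟩ := hb
      exact ⟨u + K, Set.forall_mem_range.2 fun x => (h21 x).trans
        (add_le_add_left (hu (Set.mem_range_self x)) K)⟩
    rw [abs_sub_le_iff]
    constructor
    · rw [sub_le_iff_le_add]
      exact ciSup_le fun x => (h21 x).trans (by have := le_ciSup hb x; linarith)
    · rw [sub_le_iff_le_add]
      exact ciSup_le fun x => (h12 x).trans (by have := le_ciSup hb₂ x; linarith)
  · have hb₂ : ¬ BddAbove (Set.range g₂) := by
      intro hb₂
      obtain ⟨u, hu⟩ := hb₂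
      exact hb ⟨u + K, Set.forall_mem_range.2 fun x => (h12 x).trans
        (add_le_add_left (hu (Set.mem_range_self x)) K)⟩
    rw [Real.iSup_of_not_bddAbove hb, Real.iSup_of_not_bddAbove hb₂]
    simpa using hK

lemma abs_iInf_sub_iInf_le {ι : Sort*} [Nonempty ι] {g₁ g₂ : ι → ℝ} {K : ℝ} (hK : 0 ≤ K)
    (h : ∀ x, |g₂ x - g₁ x| ≤ K) : |(⨅ x, g₂ x) - ⨅ x, g₁ x| ≤ K := by
  have h21 : ∀ x, g₂ x ≤ g₁ x + K := fun x => by linarith [(abs_sub_le_iff.1 (h x)).1]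
  have h12 : ∀ x, g₁ x ≤ g₂ x + K := fun x => by linarith [(abs_sub_le_iff.1 (h x)).2]
  by_cases hb : BddBelow (Set.range g₁)
  · have hb₂ : BddBelow (Set.range g₂) := by
      obtain ⟨u, hu⟩ := hb
      refine ⟨u - K, Set.forall_mem_range.2 fun x => ?_⟩
      have := hu (Set.mem_range_self (f := g₁) x)
      have := h12 x
      linarith
    rw [abs_sub_le_iff]
    constructor
    · have h1 : (⨅ x, g₂ x) - K ≤ ⨅ x, g₁ x :=
        le_ciInf fun x => by have := ciInf_le hb₂ x; linarith [h21 x]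
      linarith
    · have h1 : (⨅ x, g₁ x) - K ≤ ⨅ x, g₂ x :=
        le_ciInf fun x => by have := ciInf_le hb x; linarith [h12 x]
      linarith
  · have hb₂ : ¬ BddBelow (Set.range g₂) := by
      intro hb₂
      obtain ⟨u, hu⟩ := hb₂
      refine hb ⟨u - K, Set.forall_mem_range.2 fun x => ?_⟩
      have := hu (Set.mem_range_self (f := g₂) x)
      have := h21 x
      linarith
    rw [Real.iInf_of_not_bddBelow hb, Real.iInf_of_not_bddBelow hb₂]
    simpa using hK

lemma abs_sInf_image_sub_le {α : Type*} {s : Set α} {f₁ f₂ : α → ℝ} {K : ℝ} (hK : 0 ≤ K)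
    (h : ∀ x ∈ s, |f₂ x - f₁ x| ≤ K) : |sInf (f₂ '' s) - sInf (f₁ '' s)| ≤ K := by
  rcases s.eq_empty_or_nonempty with rfl | hs
  · simpa using hK
  · haveI : Nonempty s := hs.to_subtype
    rw [Set.image_eq_range, Set.image_eq_range]
    exact abs_iInf_sub_iInf_le hK fun x => h x x.2

lemma abs_sSup_image_sub_le {α : Type*} {s : Set α} {f₁ f₂ : α → ℝ} {K : ℝ} (hK : 0 ≤ K)
    (h : ∀ x ∈ s, |f₂ x - f₁ x| ≤ K) : |sSup (f₂ '' s) - sSup (f₁ '' s)| ≤ K := by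
  rcases s.eq_empty_or_nonempty with rfl | hs
  · simpa using hK
  · haveI : Nonempty s := hs.to_subtype
    rw [Set.image_eq_range, Set.image_eq_range]
    exact abs_iSup_sub_iSup_le hK fun x => h x x.2

lemma integral_pos_of_cont (f : ℝ → ℝ) (hf : Continuous f)
    (h0 : ∀ t ∈ Set.Icc (0:ℝ) (2*Real.pi), 0 ≤ f t) (t₀ : ℝ)
    (ht₀ : t₀ ∈ Set.Ico (0:ℝ) (2*Real.pi)) (hpos : 0 < f t₀) :
    0 < ∫ t in (0:ℝ)..(2*Real.pi), f t := by
  have h2π : (0:ℝ) < 2*Real.pi := by positivity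
  have hint : IntervalIntegrable f MeasureTheory.volume 0 (2*Real.pi) :=
    hf.intervalIntegrable _ _
  have hae : 0 ≤ᵐ[MeasureTheory.volume.restrict (Set.uIoc (0:ℝ) (2*Real.pi))] f := by
    rw [Set.uIoc_of_le h2π.le, Filter.EventuallyLE, MeasureTheory.ae_restrict_iff' measurableSet_Ioc]
    exact MeasureTheory.ae_of_all _ fun x hx => h0 x (Set.Ioc_subset_Icc_self hx)
  rw [intervalIntegral.integral_pos_iff_support_of_nonneg_ae' hae hint]
  refine ⟨h2π, ?_⟩
  have hU : IsOpen {x | 0 < f x} := isOpen_lt continuous_const hf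
  obtain ⟨ε, hε, hball⟩ := Metric.isOpen_iff.1 hU t₀ hpos
  set v := min (t₀ + ε) (2*Real.pi) with hv
  have htv : t₀ < v := lt_min (by linarith) ht₀.2
  have hsub : Set.Ioo t₀ v ⊆ Function.support f ∩ Set.Ioc 0 (2*Real.pi) := by
    intro x hx
    have hx1 : x ∈ Metric.ball t₀ ε := by
      rw [Real.ball_eq_Ioo]
      exact ⟨by linarith [hx.1], lt_of_lt_of_le hx.2 (min_le_left _ _)⟩
    refine ⟨(hball hx1).ne', ⟨lt_of_le_of_lt ht₀.1 hx.1, le_trans hx.2.le (min_le_right _ _)⟩⟩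
  calc (0:ENNReal) < MeasureTheory.volume (Set.Ioo t₀ v) := by
        rw [Real.volume_Ioo]; exact ENNReal.ofReal_pos.2 (by linarith)
    _ ≤ _ := MeasureTheory.measure_mono hsub

lemma abs_quot_eq (c x y A : ℝ) (hA : 0 < A) :
    |c^2*x/A - c^2*y/A| = c^2 * |x - y| / A := by
  rw [div_sub_div_same, ← mul_sub, abs_div, abs_mul, abs_of_pos hA,
    abs_of_nonneg (sq_nonneg c)]

lemma rayleigh_key (a q₁ q₂ : ℝ → ℝ) (ha : Continuous a)
    (hapos : ∀ t ∈ Set.Icc (0:ℝ) (2*Real.pi), 0 < a t)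
    (hq₁ : Continuous q₁) (hq₂ : Continuous q₂) (K : ℝ)
    (hK : ∀ t ∈ Set.Icc (0:ℝ) (2*Real.pi), |q₂ t - q₁ t| ≤ K * a t)
    (y : ℝ → ℝ) (hy : ContDiff ℝ 1 y) (hyp : Function.Periodic y (2*Real.pi))
    (hy0 : y ≠ 0) : |rayleigh a q₂ y - rayleigh a q₁ y| ≤ K := by
  have h2π : (0:ℝ) < 2*Real.pi := by positivity
  have hyc : Continuous y := hy.continuous
  have hdc : Continuous (deriv y) := hy.continuous_deriv le_rfl
  -- integrability
  have ia : IntervalIntegrable (fun t => a t * y t ^ 2) MeasureTheory.volume 0 (2*Real.pi) :=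
    (ha.mul (hyc.pow 2)).intervalIntegrable _ _
  have id2 : IntervalIntegrable (fun t => (deriv y t) ^ 2) MeasureTheory.volume 0 (2*Real.pi) :=
    (hdc.pow 2).intervalIntegrable _ _
  have iq1 : IntervalIntegrable (fun t => q₁ t * y t ^ 2) MeasureTheory.volume 0 (2*Real.pi) :=
    (hq₁.mul (hyc.pow 2)).intervalIntegrable _ _
  have iq2 : IntervalIntegrable (fun t => q₂ t * y t ^ 2) MeasureTheory.volume 0 (2*Real.pi) :=
    (hq₂.mul (hyc.pow 2)).intervalIntegrable _ _
  set D := ∫ t in (0:ℝ)..(2*Real.pi), a t * y t ^ 2 with hD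
  set N := ∫ t in (0:ℝ)..(2*Real.pi), (deriv y t) ^ 2 with hN
  set I₁ := ∫ t in (0:ℝ)..(2*Real.pi), q₁ t * y t ^ 2 with hI₁
  set I₂ := ∫ t in (0:ℝ)..(2*Real.pi), q₂ t * y t ^ 2 with hI₂
  -- positivity of D
  obtain ⟨x, hx⟩ := Function.ne_iff.1 hy0
  obtain ⟨t₀, ht₀, hxy⟩ := hyp.exists_mem_Ico₀ h2π x
  have hyt₀ : y t₀ ≠ 0 := by rw [← hxy]; simpa using hx
  have hDpos : 0 < D := by
    refine integral_pos_of_cont _ (ha.mul (hyc.pow 2))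
      (fun t ht => mul_nonneg (hapos t ht).le (sq_nonneg _)) t₀ ht₀ ?_
    exact mul_pos (hapos t₀ (Set.Ico_subset_Icc_self ht₀))
      ((sq_nonneg (y t₀)).lt_of_ne (Ne.symm (pow_ne_zero 2 hyt₀)))
  -- split the numerators
  have hsplit₁ : rayleigh a q₁ y = (N + I₁) / D := by
    rw [rayleigh, intervalIntegral.integral_add id2 iq1]
  have hsplit₂ : rayleigh a q₂ y = (N + I₂) / D := by
    rw [rayleigh, intervalIntegral.integral_add id2 iq2]
  have hdiff : rayleigh a q₂ y - rayleigh a q₁ y = (I₂ - I₁) / D := by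
    rw [hsplit₁, hsplit₂, div_sub_div_same]; ring_nf
  -- bound |I₂ - I₁|
  have hIdiff : |I₂ - I₁| ≤ K * D := by
    rw [hI₂, hI₁, ← intervalIntegral.integral_sub iq2 iq1]
    calc |∫ t in (0:ℝ)..(2*Real.pi), (q₂ t * y t ^ 2 - q₁ t * y t ^ 2)|
        ≤ ∫ t in (0:ℝ)..(2*Real.pi), |q₂ t * y t ^ 2 - q₁ t * y t ^ 2| :=
          intervalIntegral.abs_integral_le_integral_abs h2π.le
      _ ≤ ∫ t in (0:ℝ)..(2*Real.pi), K * (a t * y t ^ 2) := by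
          refine intervalIntegral.integral_mono_on h2π.le
            (((hq₂.mul (hyc.pow 2)).sub (hq₁.mul (hyc.pow 2))).abs.intervalIntegrable _ _)
            ((continuous_const.mul (ha.mul (hyc.pow 2))).intervalIntegrable _ _) fun t ht => ?_
          rw [← sub_mul, abs_mul, abs_of_nonneg (sq_nonneg (y t))]
          calc |q₂ t - q₁ t| * y t ^ 2 ≤ (K * a t) * y t ^ 2 :=
                mul_le_mul_of_nonneg_right (hK t ht) (sq_nonneg _)
            _ = K * (a t * y t ^ 2) := by ring
      _ = K * D := by rw [intervalIntegral.integral_const_mul]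
  rw [hdiff, abs_div, abs_of_pos hDpos, div_le_iff₀ hDpos]
  exact hIdiff

/-- Eigenvalue stability under `L∞` perturbation: for potentials `𝔡₁, 𝔡₂`, the `l`-th
periodic eigenvalues of `−y'' + 𝔡ᵢ y = λ a y` on `[0,2π]` satisfy
`|λ_l(𝔡₂) − λ_l(𝔡₁)| ≤ (1/c²)‖ϑ₂ − ϑ₁‖`, where `ϑᵢ(ξ) = c²𝔡ᵢ(ψ(ξ))/a(ψ(ξ))`,
`ψ` is the Liouville change of variable with `c = (1/2π)∫₀^{2π}√a`, and the norm of the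
(bounded) multiplication operator by `ϑ₂ − ϑ₁` on `L²` is its sup norm on `[0,2π]`. -/
theorem stmt16 (a 𝔡₁ 𝔡₂ : ℝ → ℝ) (c : ℝ) (ψ : ℝ → ℝ)
    (ha : Continuous a)
    (hapos : ∀ t ∈ Set.Icc (0 : ℝ) (2 * Real.pi), 0 < a t)
    (h𝔡₁ : Continuous 𝔡₁) (h𝔡₂ : Continuous 𝔡₂)
    (hc : c = (1 / (2 * Real.pi)) * ∫ s in (0 : ℝ)..(2 * Real.pi), Real.sqrt (a s))
    (hψ : ∀ t ∈ Set.Icc (0 : ℝ) (2 * Real.pi),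
      ψ ((1 / c) * ∫ s in (0 : ℝ)..t, Real.sqrt (a s)) = t)
    (hψmap : Set.MapsTo ψ (Set.Icc 0 (2 * Real.pi)) (Set.Icc 0 (2 * Real.pi)))
    (l : ℕ) :
    |hillEig a 𝔡₂ l - hillEig a 𝔡₁ l| ≤
      (1 / c ^ 2) * sSup ((fun ξ =>
        |c ^ 2 * 𝔡₂ (ψ ξ) / a (ψ ξ) - c ^ 2 * 𝔡₁ (ψ ξ) / a (ψ ξ)|) ''
          Set.Icc (0 : ℝ) (2 * Real.pi)) := by
  have h2π : (0:ℝ) < 2 * Real.pi := by positivity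
  have hsq : Continuous fun s => Real.sqrt (a s) := Real.continuous_sqrt.comp ha
  -- positivity of c
  have hIa : 0 < ∫ s in (0:ℝ)..(2 * Real.pi), Real.sqrt (a s) :=
    intervalIntegral.intervalIntegral_pos_of_pos_on (hsq.intervalIntegrable _ _)
      (fun x hx => Real.sqrt_pos.2 (hapos x (Set.Ioo_subset_Icc_self hx))) h2π
  have hcpos : 0 < c := by rw [hc]; exact mul_pos (by positivity) hIa
  have hc2 : (0:ℝ) < c ^ 2 := by positivity
  have hI2π : (∫ s in (0:ℝ)..(2 * Real.pi), Real.sqrt (a s)) = 2 * Real.pi * c := by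
    rw [hc]; field_simp
  set S := ((fun ξ =>
      |c ^ 2 * 𝔡₂ (ψ ξ) / a (ψ ξ) - c ^ 2 * 𝔡₁ (ψ ξ) / a (ψ ξ)|) ''
        Set.Icc (0:ℝ) (2 * Real.pi)) with hSdef
  -- bounded above
  obtain ⟨tmax, htmax, hmax⟩ := isCompact_Icc.exists_isMaxOn
    (Set.nonempty_Icc.2 h2π.le) ((h𝔡₂.sub h𝔡₁).abs.continuousOn)
  obtain ⟨tmin, htmin, hmin⟩ := isCompact_Icc.exists_isMinOn
    (Set.nonempty_Icc.2 h2π.le) ha.continuousOn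
  have hmpos : 0 < a tmin := hapos _ htmin
  have bddS : BddAbove S := by
    refine ⟨c ^ 2 * |𝔡₂ tmax - 𝔡₁ tmax| / a tmin, ?_⟩
    rintro v ⟨ξ, hξ, rfl⟩
    have htψ := hψmap hξ
    show |c ^ 2 * 𝔡₂ (ψ ξ) / a (ψ ξ) - c ^ 2 * 𝔡₁ (ψ ξ) / a (ψ ξ)| ≤ _
    rw [abs_quot_eq _ _ _ _ (hapos _ htψ)]
    exact div_le_div₀ (by positivity)
      (mul_le_mul_of_nonneg_left (hmax htψ) (sq_nonneg c)) hmpos (hmin htψ)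
  have hM0 : 0 ≤ sSup S := by
    have h0mem : (fun ξ =>
        |c ^ 2 * 𝔡₂ (ψ ξ) / a (ψ ξ) - c ^ 2 * 𝔡₁ (ψ ξ) / a (ψ ξ)|) 0 ∈ S :=
      Set.mem_image_of_mem _ (Set.left_mem_Icc.2 h2π.le)
    exact le_trans (abs_nonneg _) (le_csSup bddS h0mem)
  have hK0 : 0 ≤ sSup S / c ^ 2 := by positivity
  -- pointwise bound
  have hKb : ∀ t ∈ Set.Icc (0:ℝ) (2 * Real.pi),
      |𝔡₂ t - 𝔡₁ t| ≤ (sSup S / c ^ 2) * a t := by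
    intro t ht
    set ξ := (1 / c) * ∫ s in (0:ℝ)..t, Real.sqrt (a s) with hξdef
    have hξ0 : 0 ≤ ξ :=
      mul_nonneg (by positivity)
        (intervalIntegral.integral_nonneg ht.1 fun s _ => Real.sqrt_nonneg _)
    have hadd := intervalIntegral.integral_add_adjacent_intervals
      (hsq.intervalIntegrable (μ := MeasureTheory.volume) 0 t)
      (hsq.intervalIntegrable (μ := MeasureTheory.volume) t (2 * Real.pi))
    have h2 : 0 ≤ ∫ s in t..(2 * Real.pi), Real.sqrt (a s) :=
      intervalIntegral.integral_nonneg ht.2 fun s _ => Real.sqrt_nonneg _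
    have hJle : (∫ s in (0:ℝ)..t, Real.sqrt (a s)) ≤ 2 * Real.pi * c := by
      rw [← hI2π]; linarith
    have hξle : ξ ≤ 2 * Real.pi := by
      have h1 : ξ ≤ (1 / c) * (2 * Real.pi * c) :=
        mul_le_mul_of_nonneg_left hJle (by positivity)
      have h2' : (1 / c) * (2 * Real.pi * c) = 2 * Real.pi := by
        field_simp
      linarith
    have hψξ : ψ ξ = t := hψ t ht
    have hle : |c ^ 2 * 𝔡₂ t / a t - c ^ 2 * 𝔡₁ t / a t| ≤ sSup S := by
      simpa [hψξ] using le_csSup bddS (Set.mem_image_of_mem _ (⟨hξ0, hξle⟩ :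
        ξ ∈ Set.Icc (0:ℝ) (2 * Real.pi)))
    rw [abs_quot_eq _ _ _ _ (hapos t ht), div_le_iff₀ (hapos t ht)] at hle
    rw [div_mul_eq_mul_div, le_div_iff₀ hc2]
    calc |𝔡₂ t - 𝔡₁ t| * c ^ 2 = c ^ 2 * |𝔡₂ t - 𝔡₁ t| := mul_comm _ _
      _ ≤ sSup S * a t := hle
  have hgoal : (1 / c ^ 2) * sSup S = sSup S / c ^ 2 := by
    rw [one_div, inv_mul_eq_div]
  rw [hgoal]
  unfold hillEig
  refine abs_sInf_image_sub_le hK0 fun V hV => ?_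
  refine abs_sSup_image_sub_le hK0 fun y hy => ?_
  obtain ⟨hcd, hper⟩ := hV.1 hy.1
  exact rayleigh_key a 𝔡₁ 𝔡₂ ha hapos h𝔡₁ h𝔡₂ _ hKb y hcd hper hy.2
end
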